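/- Suppose the K items have distinct expected reciprocal-rank scores m(i) = E[1/(σ(i)+1)] under a permutation distribution P, and let i* = argmax_i m(i). Then the probability that i* does not have the strictly largest aggregated score S(i) = Σ_{n=1}^N 1/(σ^(n)(i)+1) among all K items is at most (K-1) · exp(-N δ^2 / (2(K/(K+1))^2)), where δ = min_{i ≠ i*} (m(i*) - m(i)) > 0. -/

import Mathlib

/-!
For a competitor `i ≠ i*`, the differences `1/(σⁿ(i*)+2) - 1/(σⁿ(i)+2)` of the per-ranking
scores are independent, take values in `[-1/2, 1/2] ⊆ [-K/(K+1), K/(K+1)]` and have mean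
`m i* - m i ≥ δ`; Hoeffding's inequality bounds the probability that their sum is nonpositive,
i.e. that `i` catches up with `i*`, by `exp(-Nδ²/(2(K/(K+1))²))`. A union bound over the `K - 1`
competitors finishes the proof.
-/

open MeasureTheory ProbabilityTheory Real Finset

instance permMeasurableSpace (K : ℕ) : MeasurableSpace (Equiv.Perm (Fin K)) := ⊤

theorem measureReal_sum_nonpos_le_exp {Ω ι : Type*} [MeasurableSpace Ω] {μ : Measure Ω}
    [IsProbabilityMeasure μ] [Fintype ι] {D : ι → Ω → ℝ} (hindep : iIndepFun D μ)
    (hD : ∀ n, AEMeasurable (D n) μ) {a b : ℝ} (hab : ∀ n, ∀ᵐ ω ∂μ, D n ω ∈ Set.Icc a b)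
    {ε : ℝ} (hε : 0 ≤ ε) (hmean : ∀ n, ε ≤ μ[D n]) :
    μ.real {ω | ∑ n, D n ω ≤ 0} ≤
      exp (-(Fintype.card ι) * ε ^ 2 / (2 * ((b - a) / 2) ^ 2)) := by
  set Z : ι → Ω → ℝ := fun n ω => -(D n ω - μ[D n])
  have hZindep : iIndepFun Z μ :=
    hindep.comp (fun n y => -(y - ∫ ω, D n ω ∂μ)) fun _ => by fun_prop
  have hZ : ∀ n ∈ (univ : Finset ι), HasSubgaussianMGF (Z n) ((‖b - a‖₊ / 2) ^ 2) μ :=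
    fun n _ => (hasSubgaussianMGF_of_mem_Icc (hD n) (hab n)).neg
  have hsub : {ω | ∑ n, D n ω ≤ 0} ⊆ {ω | Fintype.card ι * ε ≤ ∑ n, Z n ω} := by
    intro ω hω
    have hmeans : ∑ _n : ι, ε ≤ ∑ n, μ[D n] := sum_le_sum fun n _ => hmean n
    simp only [Set.mem_ofPred_eq, sum_const, card_univ, nsmul_eq_mul, Z, sum_neg_distrib,
      sum_sub_distrib] at hω hmeans ⊢
    linarith
  have hparam : ((∑ _n : ι, (‖b - a‖₊ / 2) ^ 2 : NNReal) : ℝ) =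
      Fintype.card ι * ((b - a) / 2) ^ 2 := by
    simp [Real.norm_eq_abs, div_pow]
  calc μ.real {ω | ∑ n, D n ω ≤ 0}
      ≤ μ.real {ω | Fintype.card ι * ε ≤ ∑ n, Z n ω} := measureReal_mono hsub
    _ ≤ exp (-(Fintype.card ι * ε) ^ 2 / (2 * (Fintype.card ι * ((b - a) / 2) ^ 2))) := by
        rw [← hparam]
        exact HasSubgaussianMGF.measure_sum_ge_le_of_iIndepFun hZindep hZ (by positivity)
    _ = exp (-(Fintype.card ι) * ε ^ 2 / (2 * ((b - a) / 2) ^ 2)) := by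
        rcases eq_or_ne (Fintype.card ι : ℝ) 0 with hN | hN
        · simp [hN]
        · congr 1
          field_simp

/-- Ranks are `p i + 1 ∈ {1, …, K}`, so this is `1 / (rank + 1)`. -/
noncomputable def rrScore {K : ℕ} (p : Equiv.Perm (Fin K)) (i : Fin K) : ℝ :=
  1 / ((((p i : ℕ) : ℝ) + 1) + 1)

lemma rrScore_mem_Icc {K : ℕ} (p : Equiv.Perm (Fin K)) (i : Fin K) :
    rrScore p i ∈ Set.Icc 0 (1 / 2) := by
  have h : (2 : ℝ) ≤ ((p i : ℕ) : ℝ) + 1 + 1 := by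
    have := Nat.cast_nonneg (α := ℝ) (p i : ℕ)
    linarith
  exact ⟨by unfold rrScore; positivity, one_div_le_one_div_of_le two_pos h⟩

theorem measureReal_sum_rrScore_le_le_exp {Ω : Type*} [MeasurableSpace Ω] {P : Measure Ω}
    [IsProbabilityMeasure P] {K N : ℕ} {σ : Fin N → Ω → Equiv.Perm (Fin K)}
    (hindep : iIndepFun σ P)
    {n0 : Fin N} (hident : ∀ n, IdentDistrib (σ n) (σ n0) P P) {i j : Fin K}
    {δ c : ℝ} (hδ : 0 ≤ δ) (hc : 1 / 2 ≤ c)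
    (hgap : δ ≤ ∫ ω, rrScore (σ n0 ω) i ∂P - ∫ ω, rrScore (σ n0 ω) j ∂P) :
    P.real {ω | ∑ n, rrScore (σ n ω) i ≤ ∑ n, rrScore (σ n ω) j} ≤
      exp (-(N : ℝ) * δ ^ 2 / (2 * c ^ 2)) := by
  set D : Fin N → Ω → ℝ := fun n ω => rrScore (σ n ω) i - rrScore (σ n ω) j
  have hscore : ∀ n k, AEMeasurable (fun ω => rrScore (σ n ω) k) P := fun n k =>
    (measurable_from_top (f := fun p : Equiv.Perm (Fin K) => rrScore p k)).comp_aemeasurable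
      (hident n).aemeasurable_fst
  have hD : ∀ n, AEMeasurable (D n) P := fun n => (hscore n i).sub (hscore n j)
  have hDint : ∀ n, P[D n] = ∫ ω, rrScore (σ n0 ω) i ∂P - ∫ ω, rrScore (σ n0 ω) j ∂P := by
    intro n
    have hint : ∀ k, Integrable (fun ω => rrScore (σ n ω) k) P := fun k =>
      Integrable.of_mem_Icc 0 (1 / 2) (hscore n k) (ae_of_all _ fun ω => rrScore_mem_Icc _ _)
    have hmean : ∀ k, ∫ ω, rrScore (σ n ω) k ∂P = ∫ ω, rrScore (σ n0 ω) k ∂P := fun k =>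
      ((hident n).comp (measurable_from_top (f := fun p => rrScore p k))).integral_eq
    rw [integral_sub (hint i) (hint j), hmean, hmean]
  have hDmem : ∀ n, ∀ᵐ ω ∂P, D n ω ∈ Set.Icc (-c) c := fun n =>
    Filter.Eventually.of_forall fun ω => by
      obtain ⟨hi0, hi1⟩ := rrScore_mem_Icc (σ n ω) i
      obtain ⟨hj0, hj1⟩ := rrScore_mem_Icc (σ n ω) j
      exact ⟨by linarith, by linarith⟩
  have hevent :
      {ω | ∑ n, rrScore (σ n ω) i ≤ ∑ n, rrScore (σ n ω) j} = {ω | ∑ n, D n ω ≤ 0} := by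
    ext ω
    simp only [D, Set.mem_ofPred_eq, sum_sub_distrib, sub_nonpos]
  calc P.real {ω | ∑ n, rrScore (σ n ω) i ≤ ∑ n, rrScore (σ n ω) j}
      = P.real {ω | ∑ n, D n ω ≤ 0} := by rw [hevent]
    _ ≤ exp (-(Fintype.card (Fin N)) * δ ^ 2 / (2 * ((c - -c) / 2) ^ 2)) :=
        measureReal_sum_nonpos_le_exp (hindep.comp (fun _ p => rrScore p i - rrScore p j)
          (fun _ => measurable_from_top)) hD hDmem hδ (fun n => (hDint n).symm ▸ hgap)
    _ = exp (-(N : ℝ) * δ ^ 2 / (2 * c ^ 2)) := by rw [Fintype.card_fin]; ring_nf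

theorem stmt14_general {Ω : Type*} [MeasurableSpace Ω] (P : Measure Ω) [IsProbabilityMeasure P]
    (K N : ℕ) (σ : Fin N → Ω → Equiv.Perm (Fin K))
    (hindep : iIndepFun (m := fun _ => permMeasurableSpace K) σ P)
    (hident : ∀ n m : Fin N, IdentDistrib (σ n) (σ m) P P)
    (n0 : Fin N)
    (m : Fin K → ℝ)
    (hm : ∀ i : Fin K, m i = ∫ ω, 1 / ((((σ n0 ω i : ℕ) : ℝ) + 1) + 1) ∂P)
    (istar : Fin K) (hmax : ∀ i : Fin K, i ≠ istar → m i < m istar)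
    (δ : ℝ) (hne : (Finset.univ.erase istar).Nonempty)
    (hδ : δ = (Finset.univ.erase istar).inf' hne (fun i => m istar - m i)) :
    0 < δ ∧
    (P {ω | ¬ ∀ i : Fin K, i ≠ istar →
          (∑ n : Fin N, 1 / ((((σ n ω i : ℕ) : ℝ) + 1) + 1)) <
          (∑ n : Fin N, 1 / ((((σ n ω istar : ℕ) : ℝ) + 1) + 1))}).toReal ≤
      ((K : ℝ) - 1) * exp (-(N : ℝ) * δ ^ 2 / (2 * ((K : ℝ) / ((K : ℝ) + 1)) ^ 2)) := by
  have hgap : ∀ i ∈ univ.erase istar, δ ≤ m istar - m i := fun i hi => hδ ▸ inf'_le _ hi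
  have hδpos : 0 < δ :=
    hδ ▸ (lt_inf'_iff _).2 fun i hi => sub_pos.2 (hmax i (ne_of_mem_erase hi))
  refine ⟨hδpos, ?_⟩
  have hm' : ∀ i, m i = ∫ ω, rrScore (σ n0 ω) i ∂P := hm
  have hK1 : (1 : ℝ) ≤ K := by exact_mod_cast istar.pos
  have hc : 1 / 2 ≤ (K : ℝ) / (K + 1) := by rw [div_le_div_iff₀ two_pos (by positivity)]; linarith
  have hbad : {ω | ¬ ∀ i : Fin K, i ≠ istar →
        ∑ n : Fin N, rrScore (σ n ω) i < ∑ n : Fin N, rrScore (σ n ω) istar} ⊆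
      ⋃ i ∈ univ.erase istar, {ω | ∑ n, rrScore (σ n ω) istar ≤ ∑ n, rrScore (σ n ω) i} := by
    intro ω hω
    push Not at hω
    obtain ⟨i, hi, hle⟩ := hω
    exact Set.mem_biUnion (mem_erase.2 ⟨hi, mem_univ i⟩) hle
  calc P.real _ ≤ P.real (⋃ i ∈ univ.erase istar,
          {ω | ∑ n, rrScore (σ n ω) istar ≤ ∑ n, rrScore (σ n ω) i}) :=
        measureReal_mono hbad (measure_ne_top _ _)
    _ ≤ ∑ i ∈ univ.erase istar,
          P.real {ω | ∑ n, rrScore (σ n ω) istar ≤ ∑ n, rrScore (σ n ω) i} :=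
        measureReal_biUnion_finset_le _ _
    _ ≤ ∑ _i ∈ univ.erase istar, exp (-(N : ℝ) * δ ^ 2 / (2 * ((K : ℝ) / (K + 1)) ^ 2)) :=
        sum_le_sum fun i hi => measureReal_sum_rrScore_le_le_exp hindep (fun n => hident n n0)
          hδpos.le hc (by simpa only [hm'] using hgap i hi)
    _ = ((K : ℝ) - 1) * exp (-(N : ℝ) * δ ^ 2 / (2 * ((K : ℝ) / ((K : ℝ) + 1)) ^ 2)) := by
        rw [sum_const, card_erase_of_mem (mem_univ _), card_univ, Fintype.card_fin, nsmul_eq_mul,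
          Nat.cast_pred istar.pos]

/-- If the `K` items have distinct expected reciprocal-rank scores
`m(i) = E[1/(σ(i)+1)]` and `i*` is the argmax, then the probability that `i*` does not
attain the strictly largest aggregated RRF score is at most
`(K-1)·exp(-N δ²/(2(K/(K+1))²))` where `δ = min_{i ≠ i*} (m(i*) - m(i)) > 0`.
Ranks are `(σ n ω i : ℕ) + 1 ∈ {1,...,K}`. -/
theorem stmt14 {Ω : Type*} [MeasurableSpace Ω] (P : Measure Ω) [IsProbabilityMeasure P]
    (K N : ℕ) (hK : 2 ≤ K) (σ : Fin N → Ω → Equiv.Perm (Fin K))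
    (hmeas : ∀ n, Measurable (σ n))
    (hindep : iIndepFun (m := fun _ => permMeasurableSpace K) σ P)
    (hident : ∀ n m : Fin N, IdentDistrib (σ n) (σ m) P P)
    (n0 : Fin N)
    (m : Fin K → ℝ)
    (hm : ∀ i : Fin K, m i = ∫ ω, 1 / ((((σ n0 ω i : ℕ) : ℝ) + 1) + 1) ∂P)
    (hdistinct : Function.Injective m)
    (istar : Fin K) (hmax : ∀ i : Fin K, i ≠ istar → m i < m istar)
    (δ : ℝ) (hne : (Finset.univ.erase istar).Nonempty)
    (hδ : δ = (Finset.univ.erase istar).inf' hne (fun i => m istar - m i)) :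
    0 < δ ∧
    (P {ω | ¬ ∀ i : Fin K, i ≠ istar →
          (∑ n : Fin N, 1 / ((((σ n ω i : ℕ) : ℝ) + 1) + 1)) <
          (∑ n : Fin N, 1 / ((((σ n ω istar : ℕ) : ℝ) + 1) + 1))}).toReal ≤
      ((K : ℝ) - 1) * exp (-(N : ℝ) * δ ^ 2 / (2 * ((K : ℝ) / ((K : ℝ) + 1)) ^ 2)) :=
  stmt14_general P K N σ hindep hident n0 m hm istar hmax δ hne hδ
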